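/- If R is an S-coherent ring, then every finitely generated free R-module is an S-coherent R-module, i.e., every finitely generated submodule of Rⁿ is S-finitely presented. -/

import Mathlib

open Function LinearMap

/-- A module `M` is `S`-finite: there is a f.g. submodule `N₀` and `s ∈ S` with `s • M ⊆ N₀`. -/
def SFiniteMod (R : Type*) [CommRing R] (S : Submonoid R)
    (M : Type*) [AddCommGroup M] [Module R M] : Prop :=
  ∃ N₀ : Submodule R M, N₀.FG ∧ ∃ s ∈ S, ∀ m : M, s • m ∈ N₀

/-- A module `M` is `S`-finitely presented: there is an exact sequence
`0 → K → F → M → 0` with `F` finitely generated free and `K` `S`-finite. -/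
def SFinitePres (R : Type*) [CommRing R] (S : Submonoid R)
    (M : Type*) [AddCommGroup M] [Module R M] : Prop :=
  ∃ (n : ℕ) (f : (Fin n → R) →ₗ[R] M), Function.Surjective f ∧
    ∃ K₀ : Submodule R (Fin n → R), K₀.FG ∧ K₀ ≤ LinearMap.ker f ∧
      ∃ s ∈ S, ∀ x ∈ LinearMap.ker f, s • x ∈ K₀

/-- An ideal `I` is `S`-finite. -/
def SFiniteIdeal (R : Type*) [CommRing R] (S : Submonoid R) (I : Ideal R) : Prop :=
  ∃ J : Ideal R, J.FG ∧ J ≤ I ∧ ∃ s ∈ S, ∀ x ∈ I, s * x ∈ J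

/-- `R` is an `S`-coherent ring: every finitely generated ideal is `S`-finitely presented. -/
def SCoherentRing (R : Type*) [CommRing R] (S : Submonoid R) : Prop :=
  ∀ I : Ideal R, I.FG → SFinitePres R S ↥I

/-- `M` is an `S`-coherent module: finitely generated and every finitely generated
submodule is `S`-finitely presented. -/
def SCoherentMod (R : Type*) [CommRing R] (S : Submonoid R)
    (M : Type*) [AddCommGroup M] [Module R M] : Prop :=
  Module.Finite R M ∧ ∀ N : Submodule R M, N.FG → SFinitePres R S ↥N

/-!
A finitely generated submodule of `Rⁿ` is the range of some `g : Rᵐ → Rⁿ`, so it suffices that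
`ker g` be `S`-finite; induct on `n`. For the first coordinate `g₀ : Rᵐ → R`, the f.g. ideal
`range g₀` has a presentation with `S`-finite kernel since `R` is `S`-coherent, and a
Schanuel-type argument moves this to the presentation `g₀`. Then `ker g = ker g₀ ⊓ ker g'`, with
`g'` the remaining coordinates; pulled back to a finite free module covering a f.g. submodule that
absorbs `s • ker g₀`, the map `g'` lands in `Rⁿ⁻¹`, where induction applies.
-/

namespace Submodule

variable {R : Type*} [CommRing R] {S : Submonoid R} {M : Type*} [AddCommGroup M] [Module R M]

/-- `SFinitePres R S P` says exactly that `P` is the quotient of a finite free module by an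
`IsSFinite` submodule. -/
def IsSFinite (S : Submonoid R) (N : Submodule R M) : Prop :=
  ∃ K₀ : Submodule R M, K₀.FG ∧ K₀ ≤ N ∧ ∃ s ∈ S, ∀ x ∈ N, s • x ∈ K₀

theorem FG.isSFinite {N : Submodule R M} (hN : N.FG) : N.IsSFinite S :=
  ⟨N, hN, le_rfl, 1, S.one_mem, fun x hx => by rwa [one_smul]⟩

theorem IsSFinite.inf {N L : Submodule R M} (hN : N.IsSFinite S)
    (hL : ∀ (t : ℕ) (u : (Fin t → R) →ₗ[R] M), (L.comap u).IsSFinite S) :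
    (N ⊓ L).IsSFinite S := by
  obtain ⟨K₁, hK₁, hK₁N, s₁, hs₁, hs₁N⟩ := hN
  obtain ⟨t, u, rfl⟩ := (fg_iff_exists_fin_linearMap R M).1 hK₁
  obtain ⟨K₂, hK₂, hK₂L, s₂, hs₂, hs₂L⟩ := hL t u
  refine ⟨K₂.map u, hK₂.map u, ?_, s₂ * s₁, S.mul_mem hs₂ hs₁, ?_⟩
  · rintro _ ⟨y, hy, rfl⟩
    exact ⟨hK₁N (mem_range_self u y), hK₂L hy⟩
  · rintro x ⟨hxN, hxL⟩
    obtain ⟨y, hy⟩ := hs₁N x hxN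
    have hyL : y ∈ L.comap u := by
      rw [mem_comap, hy]
      exact L.smul_mem s₁ hxL
    exact ⟨s₂ • y, hs₂L y hyL, by rw [map_smul, hy, smul_smul]⟩

end Submodule

open Submodule

section Transfer

variable {R : Type*} [CommRing R] {S : Submonoid R}
  {F G P : Type*} [AddCommGroup F] [Module R F] [AddCommGroup G] [Module R G]
  [AddCommGroup P] [Module R P]

theorem isSFinite_ker_of_surjective [Module.Projective R F] [Module.Projective R G]
    [Module.Finite R G] {f : F →ₗ[R] P} {g : G →ₗ[R] P} (hf : Surjective f)
    (hg : Surjective g) (hker : (ker f).IsSFinite S) : (ker g).IsSFinite S := by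
  obtain ⟨K₀, hK₀, hK₀f, s, hs, hsf⟩ := hker
  obtain ⟨a, ha⟩ := Module.projective_lifting_property f g hf
  obtain ⟨b, hb⟩ := Module.projective_lifting_property g f hg
  have hgb (y : F) : g (b y) = f y := LinearMap.congr_fun hb y
  have hfa (x : G) : f (a x) = g x := LinearMap.congr_fun ha x
  -- `x = φ x + b (a x)`, where `φ x ∈ ker g` always and `a x ∈ ker f` when `g x = 0`
  let φ : G →ₗ[R] G := LinearMap.id - b ∘ₗ a
  refine ⟨range φ ⊔ K₀.map b, (fg_range φ).sup (hK₀.map b), ?_, s, hs, ?_⟩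
  · refine sup_le ?_ ?_
    · rintro _ ⟨x, rfl⟩
      simp [φ, hgb, hfa]
    · rintro _ ⟨y, hy, rfl⟩
      rw [mem_ker, hgb]
      exact hK₀f hy
  · intro x hx
    have hax : a x ∈ ker f := by rw [mem_ker, hfa, mem_ker.1 hx]
    have hdecomp : s • x = φ (s • x) + b (s • a x) := by simp [φ, ← smul_add]
    rw [hdecomp]
    exact add_mem_sup (mem_range_self φ _) ⟨s • a x, hsf _ hax, rfl⟩

end Transfer

namespace SCoherentRing

variable {R : Type*} [CommRing R] {S : Submonoid R}

theorem isSFinite_ker_linearForm (h : SCoherentRing R S) {G : Type*} [AddCommGroup G]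
    [Module R G] [Module.Projective R G] [Module.Finite R G] (g : G →ₗ[R] R) :
    (ker g).IsSFinite S := by
  obtain ⟨k, p, hp, hker⟩ := h (range g) (fg_range g)
  rw [← ker_rangeRestrict]
  exact isSFinite_ker_of_surjective hp g.surjective_rangeRestrict hker

theorem isSFinite_ker_pi (h : SCoherentRing R S) {n m : ℕ}
    (g : (Fin m → R) →ₗ[R] (Fin n → R)) : (ker g).IsSFinite S := by
  induction n generalizing m with
  | zero =>
    rw [ker_eq_top.2 (Subsingleton.elim _ _)]
    exact Module.Finite.fg_top.isSFinite
  | succ n ih =>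
    have hsplit : ker g = ker (proj 0 ∘ₗ g) ⊓ ker (funLeft R R Fin.succ ∘ₗ g) := by
      ext x
      simp [funext_iff, Fin.forall_fin_succ]
    rw [hsplit]
    refine (h.isSFinite_ker_linearForm _).inf fun t u => ?_
    rw [← ker_comp]
    exact ih _

end SCoherentRing

/-- If `R` is S-coherent, every finitely generated free module `Rⁿ` is an S-coherent
module: every finitely generated submodule of `Rⁿ` is S-finitely presented. -/
theorem stmt8 {R : Type*} [CommRing R] (S : Submonoid R)
    (h : SCoherentRing R S) (n : ℕ) :
    SCoherentMod R S (Fin n → R) := by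
  refine ⟨inferInstance, fun N hN => ?_⟩
  obtain ⟨m, g, rfl⟩ := (fg_iff_exists_fin_linearMap R _).1 hN
  have hker : (ker g.rangeRestrict).IsSFinite S := by
    rw [ker_rangeRestrict]
    exact h.isSFinite_ker_pi g
  exact ⟨m, g.rangeRestrict, g.surjective_rangeRestrict, hker⟩
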